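/- The probability that a completed coupon collection sequence over d kinds ends with exactly j singletons is F(j) = j C(d,j) ∫_0^∞ x^{j-1} (e^x - 1 - x)^{d-j} e^{-x d} dx, for j = 1, 2, ..., d. -/

import Mathlib

open MeasureTheory

/-- `Sge h n k` is the number of partitions of an `n`-set into exactly `k` blocks,
each block of size at least `h`. -/
noncomputable def Sge (h n k : ℕ) : ℕ :=
  Nat.card {P : Finpartition (Finset.univ : Finset (Fin n)) //
    P.parts.card = k ∧ ∀ p ∈ P.parts, h ≤ p.card}

/-- `f n j d = (d!/d^n) C(n-1,j-1) S_{≥2}(n-j, d-j)`: the probability of completing the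
collection at step `n` with exactly `j` singletons. -/
noncomputable def f (n j d : ℕ) : ℝ :=
  (Nat.factorial d : ℝ) / (d : ℝ) ^ n * (Nat.choose (n - 1) (j - 1) : ℝ) *
    (Sge 2 (n - j) (d - j) : ℝ)

/-!
Write `j = p + 1` and `d = k + j`. Counting the maps `Fin m → Fin k` whose fibres all have at
least two elements in two ways (through their fibre partitions, and by splitting off the last
fibre) gives the exponential generating function
`∑ₘ S_{≥2}(m, k) xᵐ / m! = (eˣ - 1 - x)ᵏ / k!`.
Multiplying it by `d! (xᵖ / p!) e^{-xd}` and integrating term by term (monotone convergence),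
the `m`-th term `d! C(m+p, p) S_{≥2}(m, k) x^{m+p} / (m+p)! e^{-xd}` integrates to
`f(m+p+1, j)`, because `d^{n+1} xⁿ / n! e^{-xd}` is a probability density on `(0, ∞)`.
-/

open Finset Function
open scoped Nat

def mapsFibersGe (h : ℕ) (α β : Type*) [Fintype α] [DecidableEq α] [Fintype β] [DecidableEq β] :
    Finset (α → β) :=
  {g | ∀ y, h ≤ #{x | g x = y}}

namespace Finpartition

variable {α : Type*} [DecidableEq α]

lemma mem_parts_iff_exists_part_eq {s : Finset α} {P : Finpartition s} {p : Finset α} :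
    p ∈ P.parts ↔ ∃ a ∈ s, P.part a = p := by
  refine ⟨fun hp => ?_, fun ⟨a, ha, hap⟩ => hap ▸ P.part_mem.2 ha⟩
  obtain ⟨a, ha⟩ := P.nonempty_of_mem_parts hp
  exact ⟨a, P.le hp ha, P.part_eq_of_mem hp ha⟩

lemma ext_part {s : Finset α} {P Q : Finpartition s} (h : ∀ a ∈ s, P.part a = Q.part a) :
    P = Q := by
  ext p
  simp only [mem_parts_iff_exists_part_eq]
  exact exists_congr fun a => and_congr_right fun ha => by rw [h a ha]

variable [Fintype α]

def blockOf (P : Finpartition (univ : Finset α)) (a : α) : P.parts :=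
  ⟨P.part a, P.part_mem.2 (mem_univ a)⟩

lemma blockOf_surjective (P : Finpartition (univ : Finset α)) : Surjective P.blockOf := fun p => by
  obtain ⟨a, -, hap⟩ := mem_parts_iff_exists_part_eq.1 p.2
  exact ⟨a, Subtype.ext hap⟩

end Finpartition

section Counting

variable {α β : Type*} [Fintype α] [DecidableEq α] [DecidableEq β] {h : ℕ}

def kerPartition (g : α → β) : Finpartition (univ : Finset α) := .ofSetoid (Setoid.ker g)

lemma part_kerPartition (g : α → β) (a : α) :
    (kerPartition g).part a = ({b | g b = g a} : Finset α) := by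
  ext b
  simp [kerPartition, Finpartition.mem_part_ofSetoid_iff_rel, Setoid.ker_def, eq_comm]

noncomputable def equivKerPartitionParts {g : α → β} (hg : Surjective g) :
    β ≃ (kerPartition g).parts :=
  .ofBijective (fun y => ⟨({x | g x = y} : Finset α), by
    obtain ⟨a, rfl⟩ := hg y
    exact part_kerPartition g a ▸ (kerPartition g).part_mem.2 (mem_univ a)⟩) <| by
  refine ⟨fun y y' hyy' => ?_, fun p => ?_⟩
  · obtain ⟨a, rfl⟩ := hg y
    have hfib : ({x | g x = g a} : Finset α) = ({x | g x = y'} : Finset α) :=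
      congrArg Subtype.val hyy'
    have ha : a ∈ ({x | g x = y'} : Finset α) := by simp [← hfib]
    simpa using ha
  · obtain ⟨a, -, hap⟩ := Finpartition.mem_parts_iff_exists_part_eq.1 p.2
    exact ⟨g a, Subtype.ext (by rw [← hap, part_kerPartition])⟩

lemma equivKerPartitionParts_apply {g : α → β} (hg : Surjective g) (a : α) :
    equivKerPartitionParts hg (g a) = (kerPartition g).blockOf a :=
  Subtype.ext (part_kerPartition g a).symm

variable [Fintype β]

lemma mem_mapsFibersGe {g : α → β} : g ∈ mapsFibersGe h α β ↔ ∀ y, h ≤ #{x | g x = y} := by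
  simp [mapsFibersGe]

lemma card_mapsFibersGe_le_pow : #(mapsFibersGe h α β) ≤ Fintype.card β ^ Fintype.card α :=
  (card_filter_le _ _).trans (by simp)

lemma card_mapsFibersGe_congr {α' β' : Type*} [Fintype α'] [DecidableEq α'] [Fintype β']
    [DecidableEq β'] (eα : α ≃ α') (eβ : β ≃ β') :
    #(mapsFibersGe h α β) = #(mapsFibersGe h α' β') := by
  refine card_equiv (eα.arrowCongr eβ) fun g => ?_
  have hfiber (y : β) : #{x' | eα.arrowCongr eβ g x' = eβ y} = #{x | g x = y} :=
    card_equiv eα.symm fun x' => by simp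
  simp only [mem_mapsFibersGe, eβ.forall_congr_right.symm, hfiber]

lemma card_kerPartition_parts {g : α → β} (hg : Surjective g) :
    #(kerPartition g).parts = Fintype.card β := by
  rw [← Fintype.card_coe, Fintype.card_congr (equivKerPartitionParts hg).symm]

lemma surjective_of_mem_mapsFibersGe (hh : 0 < h) {g : α → β} (hg : g ∈ mapsFibersGe h α β) :
    Surjective g := fun y => by
  obtain ⟨a, ha⟩ := card_pos.1 (hh.trans_le (mem_mapsFibersGe.1 hg y))
  exact ⟨a, by simpa using ha⟩

lemma card_filter_kerPartition_eq (hh : 0 < h) {P : Finpartition (univ : Finset α)}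
    (hP : #P.parts = Fintype.card β) (hPh : ∀ p ∈ P.parts, h ≤ #p) :
    #{g ∈ mapsFibersGe h α β | kerPartition g = P} = (Fintype.card β)! := by
  have hcard : Fintype.card P.parts = Fintype.card β := by rw [Fintype.card_coe, hP]
  rw [← hcard, ← Fintype.card_equiv (Fintype.equivOfCardEq hcard), ← Finset.card_univ]
  symm
  refine card_bij (fun e _ => e ∘ P.blockOf) (fun e _ => ?_) (fun e _ e' _ hee' => ?_)
    (fun g hg => ?_)
  · have hfiber (y : β) : ({x | e (P.blockOf x) = y} : Finset α) = e.symm y := by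
      ext x
      simp [← Equiv.eq_symm_apply, Finpartition.blockOf, ← Subtype.val_inj,
        P.part_eq_iff_mem (e.symm y).2]
    have hker : kerPartition (e ∘ P.blockOf) = P := Finpartition.ext_part fun a _ => by
      ext b
      simp [part_kerPartition, Finpartition.blockOf, ← Subtype.val_inj,
        P.part_eq_iff_mem (P.part_mem.2 (mem_univ a))]
    simp only [mem_filter, mem_mapsFibersGe, comp_apply, hfiber, hker, and_true]
    exact fun y => hPh _ (e.symm y).2
  · refine Equiv.ext fun p => ?_
    obtain ⟨a, rfl⟩ := P.blockOf_surjective p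
    exact congrFun hee' a
  · obtain ⟨hg', rfl⟩ := mem_filter.1 hg
    have hgs := surjective_of_mem_mapsFibersGe hh hg'
    refine ⟨(equivKerPartitionParts hgs).symm, mem_univ _, funext fun a => ?_⟩
    exact (equivKerPartitionParts hgs).symm_apply_eq.2 (equivKerPartitionParts_apply hgs a).symm

theorem card_mapsFibersGe_eq_factorial_mul (hh : 0 < h) :
    #(mapsFibersGe h α β) = (Fintype.card β)! * #{P : Finpartition (univ : Finset α) |
      #P.parts = Fintype.card β ∧ ∀ p ∈ P.parts, h ≤ #p} := by
  rw [card_eq_sum_card_fiberwise (f := kerPartition) fun g hg => ?_, mul_comm, ← smul_eq_mul,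
    ← sum_const]
  · exact sum_congr rfl fun P hP => card_filter_kerPartition_eq hh (mem_filter.1 hP).2.1
      (mem_filter.1 hP).2.2
  · have hgs := surjective_of_mem_mapsFibersGe hh hg
    refine mem_filter.2 ⟨mem_univ _, card_kerPartition_parts hgs, fun p hp => ?_⟩
    obtain ⟨a, -, rfl⟩ := Finpartition.mem_parts_iff_exists_part_eq.1 hp
    rw [part_kerPartition]
    exact mem_mapsFibersGe.1 hg (g a)

def extendByNone (S : Finset α) (g : ↥(Sᶜ) → β) (x : α) : Option β :=
  if hx : x ∈ S then none else some (g ⟨x, mem_compl.2 hx⟩)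

omit [Fintype β] [DecidableEq β] in
lemma extendByNone_eq_none_iff (S : Finset α) (g : ↥(Sᶜ) → β) (x : α) :
    extendByNone S g x = none ↔ x ∈ S := by
  unfold extendByNone; split_ifs <;> simpa

omit [Fintype β] in
lemma card_extendByNone_eq_some (S : Finset α) (g : ↥(Sᶜ) → β) (y : β) :
    #{x | extendByNone S g x = some y} = #{x | g x = y} := by
  rw [← card_map (Embedding.subtype _)]
  congr 1
  ext x
  unfold extendByNone
  by_cases hx : x ∈ S <;> simp [hx]

lemma card_filter_mapsFibersGe_none_eq {S : Finset α} (hS : h ≤ #S) :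
    #{g ∈ mapsFibersGe h α (Option β) | ({x | g x = none} : Finset α) = S} =
      #(mapsFibersGe h ↥(Sᶜ) β) := by
  symm
  refine card_bij (fun g _ => extendByNone S g) (fun g hg => ?_) (fun g _ g' _ hgg' => ?_)
    (fun g hg => ?_)
  · simp only [mem_filter, mem_mapsFibersGe, Option.forall, card_extendByNone_eq_some,
      extendByNone_eq_none_iff, filter_mem_eq_inter, Finset.univ_inter] at hg ⊢
    exact ⟨⟨hS, hg⟩, trivial⟩
  · funext x
    simpa [extendByNone, mem_compl.1 x.2] using congrFun hgg' x
  · obtain ⟨hg', rfl⟩ := mem_filter.1 hg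
    have hsome (x : ↥({x | g x = none} : Finset α)ᶜ) : (g x).isSome := by
      simpa [Option.isSome_iff_ne_none] using x.2
    have hext : extendByNone _ (fun x => (g x).get (hsome x)) = g := by
      funext x
      unfold extendByNone
      split_ifs with hx
      · exact (by simpa using hx : g x = none).symm
      · simp
    refine ⟨_, mem_mapsFibersGe.2 fun y => ?_, hext⟩
    rw [← card_extendByNone_eq_some, hext]
    exact mem_mapsFibersGe.1 hg' (some y)

lemma card_mapsFibersGe_option :
    #(mapsFibersGe h α (Option β)) =
      ∑ S : Finset α, if h ≤ #S then #(mapsFibersGe h ↥(Sᶜ) β) else 0 := by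
  rw [card_eq_sum_card_fiberwise (f := fun g => ({x | g x = none} : Finset α)) (t := univ)
    (fun _ _ => mem_coe.2 (mem_univ _))]
  refine sum_congr rfl fun S _ => ?_
  split_ifs with hS
  · exact card_filter_mapsFibersGe_none_eq hS
  · refine card_eq_zero.2 (filter_eq_empty_iff.2 fun g hg hgS => hS ?_)
    rw [← hgS]
    exact mem_mapsFibersGe.1 hg none

end Counting

lemma card_mapsFibersGe_fin_succ (h m k : ℕ) :
    #(mapsFibersGe h (Fin m) (Fin (k + 1))) = ∑ ij ∈ antidiagonal m,
      m.choose ij.1 * ((if h ≤ ij.1 then 1 else 0) * #(mapsFibersGe h (Fin ij.2) (Fin k))) := by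
  rw [card_mapsFibersGe_congr (Equiv.refl _) (finSuccEquiv k), card_mapsFibersGe_option]
  have hcompl (S : Finset (Fin m)) :
      #(mapsFibersGe h ↥Sᶜ (Fin k)) = #(mapsFibersGe h (Fin (m - #S)) (Fin k)) :=
    card_mapsFibersGe_congr (Fintype.equivFinOfCardEq (by simp)) (Equiv.refl _)
  simp_rw [hcompl]
  rw [← powerset_univ, sum_powerset_apply_card
    (fun l => if h ≤ l then #(mapsFibersGe h (Fin (m - l)) (Fin k)) else 0),
    Nat.sum_antidiagonal_eq_sum_range_succ_mk]
  simp

lemma add_choose_mul_pow_div_factorial (x : ℝ) (i j : ℕ) :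
    ((i + j).choose i : ℝ) * (x ^ (i + j) / (i + j)!) = x ^ i / i ! * (x ^ j / j !) := by
  have hfact := Nat.add_choose_mul_factorial_mul_factorial j i
  rw [add_comm j i] at hfact
  have hc : ((i + j).choose i : ℝ) ≠ 0 :=
    Nat.cast_ne_zero.2 (Nat.choose_pos (Nat.le_add_right i j)).ne'
  rw [← hfact]
  push_cast
  rw [pow_add]
  field_simp

lemma summable_norm_mul_pow_div_factorial {a : ℕ → ℝ} {C : ℝ} (ha : ∀ n, |a n| ≤ C ^ n)
    (x : ℝ) : Summable fun n => ‖a n * x ^ n / (n !)‖ := by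
  refine .of_nonneg_of_le (fun n => norm_nonneg _) (fun n => ?_)
    (Real.summable_pow_div_factorial (C * |x|))
  rw [norm_div, norm_mul, norm_pow, Real.norm_natCast, Real.norm_eq_abs, Real.norm_eq_abs, mul_pow]
  gcongr
  exact ha n

lemma hasSum_binomial_convolution {a b : ℕ → ℝ} {x : ℝ}
    (ha : Summable fun n => ‖a n * x ^ n / (n !)‖) (hb : Summable fun n => ‖b n * x ^ n / (n !)‖) :
    HasSum (fun n => (∑ ij ∈ antidiagonal n, n.choose ij.1 * a ij.1 * b ij.2) * x ^ n / n !)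
      ((∑' n, a n * x ^ n / n !) * ∑' n, b n * x ^ n / n !) := by
  rw [tsum_mul_tsum_eq_tsum_sum_antidiagonal_of_summable_norm ha hb]
  have hterm (n : ℕ) : (∑ ij ∈ antidiagonal n, n.choose ij.1 * a ij.1 * b ij.2) * x ^ n / n ! =
      ∑ ij ∈ antidiagonal n, a ij.1 * x ^ ij.1 / ij.1 ! * (b ij.2 * x ^ ij.2 / ij.2 !) := by
    rw [sum_mul, sum_div]
    refine sum_congr rfl fun ij hij => ?_
    rw [← mem_antidiagonal.1 hij]
    linear_combination a ij.1 * b ij.2 * add_choose_mul_pow_div_factorial x ij.1 ij.2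
  rw [funext hterm]
  exact (summable_norm_sum_mul_antidiagonal_of_summable_norm ha hb).of_norm.hasSum

lemma hasSum_ite_pow_div_factorial (h : ℕ) (x : ℝ) :
    HasSum (fun n => if h ≤ n then x ^ n / n ! else 0)
      (Real.exp x - ∑ n ∈ range h, x ^ n / n !) := by
  have hexp := NormedSpace.expSeries_div_hasSum_exp x
  rw [← Real.exp_eq_exp_ℝ, ← hasSum_nat_add_iff' h] at hexp
  rw [← hasSum_nat_add_iff' h]
  simpa [sum_ite_of_false] using hexp

theorem hasSum_card_mapsFibersGe (h k : ℕ) (x : ℝ) :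
    HasSum (fun m => (#(mapsFibersGe h (Fin m) (Fin k)) : ℝ) * x ^ m / m !)
      ((Real.exp x - ∑ n ∈ range h, x ^ n / n !) ^ k) := by
  induction k with
  | zero =>
    have hcard (m : ℕ) : #(mapsFibersGe h (Fin m) (Fin 0)) = 0 ^ m := by
      simp [mapsFibersGe]
    simpa [hcard] using hasSum_single (f := fun m : ℕ => ((0 ^ m : ℕ) : ℝ) * x ^ m / m !) 0
      (fun m hm => by simp [hm])
  | succ k ih =>
    have htail : HasSum (fun n => (if h ≤ n then 1 else 0 : ℝ) * x ^ n / n !)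
        (Real.exp x - ∑ n ∈ range h, x ^ n / n !) := by
      convert hasSum_ite_pow_div_factorial h x using 2 with n
      split_ifs <;> simp
    have hconv := hasSum_binomial_convolution (a := fun n => if h ≤ n then 1 else 0)
      (b := fun n => (#(mapsFibersGe h (Fin n) (Fin k)) : ℝ))
      (summable_norm_mul_pow_div_factorial (C := 1) (fun n => by split_ifs <;> simp) x)
      (summable_norm_mul_pow_div_factorial (C := k) (fun n => by
        simpa using (Nat.cast_le (α := ℝ)).2
          (card_mapsFibersGe_le_pow (h := h) (α := Fin n) (β := Fin k))) x)
    rw [htail.tsum_eq, ih.tsum_eq, ← _root_.pow_succ'] at hconv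
    convert hconv using 3 with m
    rw [card_mapsFibersGe_fin_succ]
    push_cast
    simp

lemma card_filter_finpartition_eq_sge (h m k : ℕ) :
    #{P : Finpartition (univ : Finset (Fin m)) | #P.parts = k ∧ ∀ p ∈ P.parts, h ≤ #p} =
      Sge h m k := by
  rw [Sge, Nat.card_eq_fintype_card, Fintype.card_subtype]

theorem hasSum_sge_mul_pow_div_factorial {h : ℕ} (hh : 0 < h) (k : ℕ) (x : ℝ) :
    HasSum (fun m => (Sge h m k : ℝ) * x ^ m / m !)
      ((Real.exp x - ∑ n ∈ range h, x ^ n / n !) ^ k / k !) := by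
  have hterm (m : ℕ) : (Sge h m k : ℝ) * x ^ m / m ! =
      #(mapsFibersGe h (Fin m) (Fin k)) * x ^ m / m ! / k ! := by
    rw [card_mapsFibersGe_eq_factorial_mul hh, Fintype.card_fin, card_filter_finpartition_eq_sge]
    push_cast
    field_simp
  simpa only [hterm] using (hasSum_card_mapsFibersGe h k x).div_const (k ! : ℝ)

theorem hasSum_integral_of_nonneg {α : Type*} [MeasurableSpace α] {μ : Measure α}
    {g : ℕ → α → ℝ} {G : α → ℝ} (hg : ∀ n, Integrable (g n) μ) (hG : Integrable G μ)
    (hg0 : ∀ n, 0 ≤ᵐ[μ] g n) (hgG : ∀ᵐ x ∂μ, HasSum (g · x) (G x)) :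
    HasSum (fun n => ∫ x, g n x ∂μ) (∫ x, G x ∂μ) := by
  rw [hasSum_iff_tendsto_nat_of_nonneg fun n => integral_nonneg_of_ae (hg0 n)]
  have hmono : ∀ᵐ x ∂μ, Monotone fun n => ∑ i ∈ range n, g i x := by
    filter_upwards [ae_all_iff.2 hg0] with x hx
    exact fun m n hmn => sum_le_sum_of_subset_of_nonneg (range_mono hmn) fun i _ _ => hx i
  have hlim : ∀ᵐ x ∂μ,
      Filter.Tendsto (fun n => ∑ i ∈ range n, g i x) Filter.atTop (nhds (G x)) := by
    filter_upwards [hgG] with x hx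
    exact hx.tendsto_sum_nat
  simpa [integral_finsetSum _ fun i _ => hg i] using
    integral_tendsto_of_tendsto_of_monotone (fun n => integrable_finsetSum _ fun i _ => hg i) hG
      hmono hlim

noncomputable def erlangDensity (n : ℕ) (c x : ℝ) : ℝ :=
  c ^ (n + 1) * (x ^ n / n ! * Real.exp (-(x * c)))

lemma erlangDensity_nonneg (n : ℕ) {c x : ℝ} (hc : 0 ≤ c) (hx : 0 ≤ x) :
    0 ≤ erlangDensity n c x := by
  unfold erlangDensity
  positivity

lemma integral_erlangDensity (n : ℕ) {c : ℝ} (hc : 0 < c) :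
    ∫ x in Set.Ioi (0 : ℝ), erlangDensity n c x = 1 := by
  have h := Real.integral_rpow_mul_exp_neg_mul_Ioi (a := n + 1) (by positivity) hc
  rw [add_sub_cancel_right, Real.Gamma_nat_eq_factorial, ← Nat.cast_add_one,
    Real.rpow_natCast] at h
  calc ∫ x in Set.Ioi (0 : ℝ), erlangDensity n c x
      = c ^ (n + 1) / n ! * ∫ x in Set.Ioi (0 : ℝ), x ^ (n : ℝ) * Real.exp (-(c * x)) := by
        rw [← integral_const_mul]
        refine setIntegral_congr_fun measurableSet_Ioi fun x _ => ?_
        rw [erlangDensity, Real.rpow_natCast, mul_comm c x]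
        ring
    _ = 1 := by
        rw [h, one_div, inv_pow]
        field_simp

lemma integrableOn_erlangDensity (n : ℕ) {c : ℝ} (hc : 0 < c) :
    IntegrableOn (erlangDensity n c) (Set.Ioi 0) :=
  Integrable.of_integral_ne_zero <| by
    rw [integral_erlangDensity n hc]
    exact one_ne_zero

lemma integrableOn_pow_mul_exp_sub_one_sub_pow_mul_exp_neg_mul (p k : ℕ) {c : ℝ} (hc : k < c) :
    IntegrableOn (fun x => x ^ p * (Real.exp x - 1 - x) ^ k * Real.exp (-(x * c)))
      (Set.Ioi 0) := by
  have hck : 0 < c - k := sub_pos.2 hc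
  refine ((integrableOn_erlangDensity p hck).const_mul (p ! / (c - k) ^ (p + 1))).mono'
    (Continuous.aestronglyMeasurable (by fun_prop))
    ((ae_restrict_iff' measurableSet_Ioi).2 (Filter.Eventually.of_forall fun x hx => ?_))
  have hx : 0 < x := hx
  have htail : 0 ≤ Real.exp x - 1 - x := by linarith [Real.add_one_le_exp x]
  calc ‖x ^ p * (Real.exp x - 1 - x) ^ k * Real.exp (-(x * c))‖
      = x ^ p * (Real.exp x - 1 - x) ^ k * Real.exp (-(x * c)) :=
        Real.norm_of_nonneg (by positivity)
    _ ≤ x ^ p * Real.exp x ^ k * Real.exp (-(x * c)) := by gcongr; linarith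
    _ = p ! / (c - k) ^ (p + 1) * erlangDensity p (c - k) x := by
        rw [erlangDensity, ← Real.exp_nat_mul, mul_assoc, ← Real.exp_add]
        field_simp
        ring_nf

lemma f_nonneg (n j d : ℕ) : 0 ≤ f n j d := by
  unfold f
  positivity

lemma hasSum_f_mul_erlangDensity {d p : ℕ} (hpd : p + 1 ≤ d) (x : ℝ) :
    HasSum (fun m => f (m + p + 1) (p + 1) d * erlangDensity (m + p) d x)
      ((p + 1 : ℕ) * (d.choose (p + 1) : ℝ) *
        (x ^ p * (Real.exp x - 1 - x) ^ (d - (p + 1)) * Real.exp (-(x * d)))) := by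
  obtain ⟨k, rfl⟩ : ∃ k, d = k + (p + 1) := ⟨d - (p + 1), by omega⟩
  set d := k + (p + 1)
  set e := Real.exp (-(x * d))
  have hd : (d : ℝ) ≠ 0 := by positivity
  have hconst : ((p + 1 : ℕ) : ℝ) * (d.choose (p + 1) : ℝ) * (p ! * k !) = d ! := by
    rw [← Nat.add_choose_mul_factorial_mul_factorial k (p + 1), Nat.factorial_succ]
    push_cast
    ring
  have hterm (m : ℕ) : f (m + p + 1) (p + 1) d * erlangDensity (m + p) d x =
      d ! * (x ^ p / p ! * e) * (Sge 2 m k * x ^ m / m !) := by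
    rw [f, erlangDensity, show m + p + 1 - 1 = p + m by omega, show p + 1 - 1 = p by omega,
      show m + p + 1 - (p + 1) = m by omega, show d - (p + 1) = k by omega, add_comm m p]
    have hpow : (d : ℝ) ^ (p + m + 1) * ((d : ℝ) ^ (p + m + 1))⁻¹ = 1 :=
      mul_inv_cancel₀ (pow_ne_zero _ hd)
    linear_combination (d ! * (p + m).choose p * Sge 2 m k * (x ^ (p + m) / (p + m)!) * e : ℝ) *
      hpow + (d ! * Sge 2 m k * e : ℝ) * add_choose_mul_pow_div_factorial x p m
  have hlim : d ! * (x ^ p / p ! * e) *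
      ((Real.exp x - ∑ n ∈ range 2, x ^ n / n !) ^ k / k !) =
      (p + 1 : ℕ) * (d.choose (p + 1) : ℝ) *
        (x ^ p * (Real.exp x - 1 - x) ^ (d - (p + 1)) * e) := by
    have htail : ∑ n ∈ range 2, x ^ n / n ! = 1 + x := by simp [sum_range_succ]
    rw [← hconst, htail, show d - (p + 1) = k by omega]
    field_simp
    ring
  rw [funext hterm, ← hlim]
  exact (hasSum_sge_mul_pow_div_factorial two_pos k x).mul_left _

theorem singletons_distribution_general (d j : ℕ) (hj : 1 ≤ j) (hjd : j ≤ d) :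
    ∑' n : ℕ, f (n + 1) j d
      = (j : ℝ) * (Nat.choose d j : ℝ) *
          ∫ x in Set.Ioi (0 : ℝ),
            x ^ (j - 1) * (Real.exp x - 1 - x) ^ (d - j) * Real.exp (-(x * d)) := by
  obtain ⟨p, rfl⟩ : ∃ p, j = p + 1 := ⟨j - 1, by omega⟩
  have hd : (0 : ℝ) < d := by exact_mod_cast (show 0 < d by omega)
  have hsum := hasSum_integral_of_nonneg
    (fun m => (integrableOn_erlangDensity (m + p) hd).const_mul _)
    ((integrableOn_pow_mul_exp_sub_one_sub_pow_mul_exp_neg_mul p (d - (p + 1))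
      (by exact_mod_cast (show d - (p + 1) < d by omega))).const_mul _)
    (fun m => (ae_restrict_iff' measurableSet_Ioi).2 (Filter.Eventually.of_forall
      fun x (hx : 0 < x) => mul_nonneg (f_nonneg _ _ _) (erlangDensity_nonneg _ hd.le hx.le)))
    (Filter.Eventually.of_forall (hasSum_f_mul_erlangDensity hjd))
  simp only [integral_const_mul, integral_erlangDensity _ hd, mul_one] at hsum
  have hlow : ∑ i ∈ range p, f (i + 1) (p + 1) d = 0 :=
    sum_eq_zero fun i hi => by simp [f, Nat.choose_eq_zero_of_lt (mem_range.1 hi)]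
  rw [Nat.add_sub_cancel]
  exact ((hasSum_nat_add_iff' p).1 (by rwa [hlow, sub_zero])).tsum_eq

/-- The probability that a completed coupon collection sequence over `d` kinds ends with
exactly `j` singletons:
`F(j) = Σ_n f(n,j) = j C(d,j) ∫_0^∞ x^{j-1}(e^x - 1 - x)^{d-j} e^{-xd} dx`. -/
theorem singletons_distribution (d j : ℕ) (hd : 1 ≤ d) (hj : 1 ≤ j) (hjd : j ≤ d) :
    ∑' n : ℕ, f (n + 1) j d
      = (j : ℝ) * (Nat.choose d j : ℝ) *
          ∫ x in Set.Ioi (0 : ℝ),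
            x ^ (j - 1) * (Real.exp x - 1 - x) ^ (d - j) * Real.exp (-(x * d)) :=
  singletons_distribution_general d j hj hjd
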